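/- arXiv:2603.20526 — 2 statements merged into one kernel-verified Lean document; each statement's English description precedes it below -/
import Mathlib

section
/- In the symmetric K-armed bandit setup, the cosine of the angle between an incorrect-arm gradient φ(a) (a ≠ y*) and φ(y*) satisfies |cos(φ(a), φ(y*))| = p·(1−p)·K/((K−1)·‖φ(a)‖·‖φ(y*)‖), and for fixed K ≥ 3 there exist constants c, C > 0 such that c·p ≤ |cos(φ(a), φ(y*))| ≤ C·p for all p ∈ (0, 1/2]. -/
lemma sum_split' {K : ℕ} (y a : Fin K) (h : a ≠ y) (f : Fin K → ℝ) (A B C : ℝ)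
    (hy : f y = A) (hA : f a = B) (ho : ∀ b, b ≠ y → b ≠ a → f b = C) :
    ∑ b, f b = A + B + ((K : ℝ) - 2) * C := by
  have hf : ∀ b, f b = C + (if b = y then A - C else 0) + (if b = a then B - C else 0) := by
    intro b
    rcases eq_or_ne b y with h1 | h1
    · subst h1; simp [hy, Ne.symm h]
    · rcases eq_or_ne b a with h2 | h2
      · subst h2; simp [hA, h1]
      · simp [ho b h1 h2, h1, h2]
  rw [Finset.sum_congr rfl (fun b _ => hf b)]
  simp [Finset.sum_add_distrib, Finset.sum_ite_eq', Finset.card_univ, nsmul_eq_mul]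
  ring

set_option maxHeartbeats 1000000 in
open scoped RealInnerProductSpace in
theorem stmt_6 (K : ℕ) (hK : 3 ≤ K) (y a : Fin K) (ha : a ≠ y) :
    let π : ℝ → EuclideanSpace ℝ (Fin K) := fun p => WithLp.toLp 2 (fun b => if b = y then p else (1 - p) / (K - 1))
    let φ : ℝ → Fin K → EuclideanSpace ℝ (Fin K) :=
      fun p b => EuclideanSpace.single b 1 - π p
    let cosθ : ℝ → ℝ := fun p => ⟪φ p a, φ p y⟫ / (‖φ p a‖ * ‖φ p y‖)
    (∀ p ∈ Set.Ioo (0:ℝ) 1,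
        |cosθ p| = p * (1 - p) * K / ((K - 1) * ‖φ p a‖ * ‖φ p y‖)) ∧
    ∃ c C : ℝ, 0 < c ∧ 0 < C ∧ ∀ p ∈ Set.Ioc (0:ℝ) (1/2),
        c * p ≤ |cosθ p| ∧ |cosθ p| ≤ C * p := by
  intro π φ cosθ
  have hk3 : (3:ℝ) ≤ (K:ℝ) := by exact_mod_cast hK
  have hk1 : (0:ℝ) < (K:ℝ) - 1 := by linarith
  have hk1' : ((K:ℝ) - 1) ≠ 0 := ne_of_gt hk1
  have hkpos : (0:ℝ) < (K:ℝ) := by linarith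
  -- coordinates
  have hcoord : ∀ (p : ℝ) (b c : Fin K),
      φ p b c = (if c = b then 1 else 0) - (if c = y then p else (1 - p) / ((K:ℝ) - 1)) := by
    intro p b c
    simp [φ, π, EuclideanSpace.single_apply]
  have hinner : ∀ p : ℝ, ⟪φ p a, φ p y⟫ = -(p * (1 - p) * K / ((K:ℝ) - 1)) := by
    intro p
    rw [PiLp.inner_apply]
    simp only [RCLike.inner_apply, conj_trivial]
    rw [sum_split' y a ha _ ((0 - p) * (1 - p))
        ((1 - (1 - p) / ((K:ℝ) - 1)) * (0 - (1 - p) / ((K:ℝ) - 1)))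
        ((0 - (1 - p) / ((K:ℝ) - 1)) * (0 - (1 - p) / ((K:ℝ) - 1)))]
    · field_simp
      ring
    · simp [hcoord, Ne.symm ha]; ring
    · simp [hcoord, ha]; ring
    · intro b h1 h2
      simp [hcoord, h1, h2]
  have hny : ∀ p : ℝ, ‖φ p y‖ ^ 2 = (1 - p) ^ 2 * K / ((K:ℝ) - 1) := by
    intro p
    rw [← real_inner_self_eq_norm_sq, PiLp.inner_apply]
    simp only [RCLike.inner_apply, conj_trivial]
    rw [sum_split' y a ha _ ((1 - p) * (1 - p))
        ((0 - (1 - p) / ((K:ℝ) - 1)) * (0 - (1 - p) / ((K:ℝ) - 1)))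
        ((0 - (1 - p) / ((K:ℝ) - 1)) * (0 - (1 - p) / ((K:ℝ) - 1)))]
    · field_simp
      ring
    · simp [hcoord, Ne.symm ha]
    · simp [hcoord, ha]
    · intro b h1 h2
      simp [hcoord, h1, h2]
  have hna : ∀ p : ℝ, ‖φ p a‖ ^ 2 = p ^ 2 + 1 - (1 - p ^ 2) / ((K:ℝ) - 1) := by
    intro p
    rw [← real_inner_self_eq_norm_sq, PiLp.inner_apply]
    simp only [RCLike.inner_apply, conj_trivial]
    rw [sum_split' y a ha _ ((0 - p) * (0 - p))
        ((1 - (1 - p) / ((K:ℝ) - 1)) * (1 - (1 - p) / ((K:ℝ) - 1)))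
        ((0 - (1 - p) / ((K:ℝ) - 1)) * (0 - (1 - p) / ((K:ℝ) - 1)))]
    · field_simp
      ring
    · simp [hcoord, Ne.symm ha]
    · simp [hcoord, ha]
    · intro b h1 h2
      simp [hcoord, h1, h2]
  constructor
  · rintro p ⟨hp0, hp1⟩
    have h1p : (0:ℝ) < 1 - p := by linarith
    simp only [cosθ]
    rw [hinner, abs_div, abs_neg, abs_of_nonneg (by positivity),
        abs_of_nonneg (by positivity), div_div]
    ring
  · refine ⟨1/2, 4, by norm_num, by norm_num, ?_⟩
    rintro p ⟨hp0, hp12⟩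
    have hp1 : p < 1 := by linarith
    have h1p : (0:ℝ) < 1 - p := by linarith
    -- bounds on ‖φ p a‖^2
    have hdivle : (1 - p ^ 2) / ((K:ℝ) - 1) ≤ 1 / 2 := by
      rw [div_le_iff₀ hk1]
      nlinarith [sq_nonneg p]
    have hdiv0 : (0:ℝ) ≤ (1 - p ^ 2) / ((K:ℝ) - 1) :=
      div_nonneg (by nlinarith) (le_of_lt hk1)
    have hNlb : (1/2 : ℝ) ≤ ‖φ p a‖ ^ 2 := by rw [hna]; nlinarith [sq_nonneg p]
    have hNub : ‖φ p a‖ ^ 2 ≤ 2 := by rw [hna]; nlinarith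
    have hNpos : (0:ℝ) < ‖φ p a‖ ^ 2 := by linarith
    have hypos : (0:ℝ) < ‖φ p y‖ ^ 2 := by rw [hny]; positivity
    have hna0 : ‖φ p a‖ ≠ 0 := by
      intro h; rw [h] at hNpos; simp at hNpos
    have hny0 : ‖φ p y‖ ≠ 0 := by
      intro h; rw [h] at hypos; simp at hypos
    have hr1 : (1:ℝ) ≤ (K:ℝ) / ((K:ℝ) - 1) := by rw [le_div_iff₀ hk1]; linarith
    have hr2 : (K:ℝ) / ((K:ℝ) - 1) ≤ 3/2 := by rw [div_le_iff₀ hk1]; linarith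
    have key : |cosθ p| ^ 2 * ‖φ p a‖ ^ 2 = p ^ 2 * ((K:ℝ) / ((K:ℝ) - 1)) := by
      rw [sq_abs]
      simp only [cosθ]
      rw [hinner, div_pow, mul_pow, neg_sq, hny]
      field_simp
    have habs : 0 ≤ |cosθ p| := abs_nonneg _
    generalize hgr : (K:ℝ) / ((K:ℝ) - 1) = r at key hr1 hr2
    generalize hgN : ‖φ p a‖ ^ 2 = N at key hNlb hNub
    generalize hgc : |cosθ p| = cA at key habs ⊢
    constructor
    · apply le_of_pow_le_pow_left₀ two_ne_zero habs
      nlinarith [key, mul_nonneg (sq_nonneg p) (sub_nonneg.mpr hr1),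
        mul_nonneg (mul_nonneg habs habs) (sub_nonneg.mpr hNub)]
    · apply le_of_pow_le_pow_left₀ two_ne_zero (by linarith : (0:ℝ) ≤ 4 * p)
      nlinarith [key, mul_nonneg (sq_nonneg p) (sub_nonneg.mpr hr2),
        mul_nonneg (mul_nonneg habs habs) (sub_nonneg.mpr hNlb)]
end

section
/- In the symmetric K-armed bandit, for ungated policy gradient the per-sample expected squared norm of the component of g(A) = U(A)·(e_A − π) orthogonal to φ(y*) equals (1−p)·b²·E[‖Π_⊥ φ(a)‖²], where a is uniform over incorrect arms, and ‖Π_⊥ φ(a)‖² = ‖φ(a)‖² − ⟨φ(a), φ(y*)⟩²/‖φ(y*)‖², which is strictly positive for K ≥ 3 and p ∈ (0,1). -/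
open scoped RealInnerProductSpace in
theorem stmt_16 (K : ℕ) (hK : 3 ≤ K) (y : Fin K) (p b : ℝ)
    (hp : p ∈ Set.Ioo (0:ℝ) 1) (hb : b ∈ Set.Ioo (0:ℝ) 1) :
    let π : Fin K → ℝ := fun a => if a = y then p else (1 - p) / (K - 1)
    let πv : EuclideanSpace ℝ (Fin K) := WithLp.toLp 2 (fun a => π a)
    let φ : Fin K → EuclideanSpace ℝ (Fin K) := fun a => EuclideanSpace.single a 1 - πv
    let U : Fin K → ℝ := fun a => (if a = y then 1 else 0) - b
    let Pperp : EuclideanSpace ℝ (Fin K) → EuclideanSpace ℝ (Fin K) :=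
      fun v => v - (⟪v, φ y⟫ / ‖φ y‖ ^ 2) • φ y
    (∑ a, π a * ‖Pperp (U a • φ a)‖ ^ 2)
        = (1 - p) * b ^ 2 * ((∑ a, if a = y then 0 else ‖Pperp (φ a)‖ ^ 2) / (K - 1)) ∧
    ∀ a, a ≠ y →
      ‖Pperp (φ a)‖ ^ 2 = ‖φ a‖ ^ 2 - ⟪φ a, φ y⟫ ^ 2 / ‖φ y‖ ^ 2 ∧
      0 < ‖Pperp (φ a)‖ ^ 2 := by
  obtain ⟨hp0, hp1⟩ := hp
  obtain ⟨hb0, hb1⟩ := hb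
  intro π πv φ U Pperp
  have hK1 : (1:ℝ) < (K:ℝ) := by
    have : (3:ℝ) ≤ (K:ℝ) := by exact_mod_cast hK
    linarith
  have hKne : (K:ℝ) - 1 ≠ 0 := by linarith
  have hφap : ∀ a i, (φ a) i = (if i = a then 1 else 0) - π i := by
    intro a i
    simp [φ, πv, EuclideanSpace.single_apply]
  have hφy : φ y ≠ 0 := by
    intro h
    have := hφap y y
    rw [h] at this
    simp [π] at this
    linarith
  have hnorm : ‖φ y‖ ^ 2 ≠ 0 := pow_ne_zero _ (norm_ne_zero_iff.mpr hφy)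
  have hPy : Pperp (φ y) = 0 := by
    simp only [Pperp, real_inner_self_eq_norm_sq]
    rw [div_self hnorm, one_smul, sub_self]
  have hPsmul : ∀ (c : ℝ) (v : EuclideanSpace ℝ (Fin K)), Pperp (c • v) = c • Pperp v := by
    intro c v
    simp only [Pperp, real_inner_smul_left, smul_sub, smul_smul, mul_div_assoc]
  have hPyth : ∀ v : EuclideanSpace ℝ (Fin K),
      ‖Pperp v‖ ^ 2 = ‖v‖ ^ 2 - ⟪v, φ y⟫ ^ 2 / ‖φ y‖ ^ 2 := by
    intro v
    have h := norm_sub_sq_real v ((⟪v, φ y⟫ / ‖φ y‖ ^ 2) • φ y)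
    rw [real_inner_smul_right, norm_smul, Real.norm_eq_abs, mul_pow, sq_abs] at h
    simp only [Pperp]
    rw [h]
    field_simp
    ring
  have hPa : ∀ a, a ≠ y → Pperp (φ a) ≠ 0 := by
    intro a ha h
    simp only [Pperp] at h
    rw [sub_eq_zero] at h
    set c : ℝ := ⟪φ a, φ y⟫ / ‖φ y‖ ^ 2 with hc
    obtain ⟨z, hza, hzy⟩ : ∃ z : Fin K, z ≠ a ∧ z ≠ y := by
      by_contra hall
      push_neg at hall
      have hsub : (Finset.univ : Finset (Fin K)) ⊆ {a, y} := by
        intro x _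
        rcases eq_or_ne x a with h' | h'
        · simp [h']
        · simp [hall x h']
      have h1 : (Finset.univ : Finset (Fin K)).card ≤ ({a, y} : Finset (Fin K)).card :=
        Finset.card_le_card hsub
      have h2 : ({a, y} : Finset (Fin K)).card ≤ 2 := by
        apply le_trans (Finset.card_insert_le _ _); simp
      simp [Finset.card_univ] at h1
      omega
    have hz : (φ a) z = (c • φ y) z := by rw [h]
    have ha' : (φ a) a = (c • φ y) a := by rw [h]
    have hcz : (c • φ y) z = c * (φ y) z := rfl
    have hca : (c • φ y) a = c * (φ y) a := rfl
    rw [hcz] at hz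
    rw [hca] at ha'
    rw [hφap a z, hφap y z, hφap a a, hφap y a] at *
    simp [hza, hzy, ha, if_neg (Ne.symm hza)] at hz ha'
    -- hz : -π z = c * -π z, π z = (1-p)/(K-1) ≠ 0
    have hπz : π z ≠ 0 := by
      simp only [π, if_neg hzy]
      exact div_ne_zero (by linarith) hKne
    have hc1 : c = 1 := by
      refine mul_right_cancel₀ hπz ?_
      rw [one_mul]
      exact hz.symm
    rw [hc1, one_mul] at ha'
    linarith
  refine ⟨?_, fun a ha => ⟨hPyth (φ a), pow_pos (norm_pos_iff.mpr (hPa a ha)) 2⟩⟩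
  have hterm : ∀ a, π a * ‖Pperp (U a • φ a)‖ ^ 2 =
      if a = y then 0 else (1 - p) * b ^ 2 / ((K : ℝ) - 1) * ‖Pperp (φ a)‖ ^ 2 := by
    intro a
    rw [hPsmul, norm_smul, Real.norm_eq_abs, mul_pow, sq_abs]
    by_cases h : a = y
    · subst h
      simp [hPy]
    · simp only [if_neg h, π, U]
      ring
  rw [Finset.sum_congr rfl fun a _ => hterm a, Finset.sum_div, Finset.mul_sum]
  refine Finset.sum_congr rfl fun a _ => ?_
  split_ifs <;> ring
end
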